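/- arXiv:2111.07618 — 2 statements merged into one kernel-verified Lean document; each statement's English description precedes it below -/
import Mathlib

section
/- Let g : ℝⁿ → ℝ be differentiable with L-Lipschitz gradient, h₁ : ℝⁿ → ℝ ∪ {+∞} a proper lower semicontinuous convex function, h₂ : ℝⁿ → ℝ a continuous convex function, f = g + h₁ − h₂. Let x, x⁺ ∈ ℝⁿ with h₁(x) and h₁(x⁺) finite, d = x⁺ − x, and let ξ ∈ ∂h₂(x). Then for every η ∈ (0, 1], f(x + ηd) ≤ f(x) + η((∇g(x) − ξ)ᵀd + h₁(x⁺) − h₁(x)) + (η²L/2)‖d‖². -/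
open Matrix Filter Topology RealInnerProductSpace

noncomputable section

/-- `n`-dimensional Euclidean space. -/
abbrev Euc (n : ℕ) := EuclideanSpace ℝ (Fin n)

/-- `v` is a subgradient of the extended-real-valued convex function `φ` at `x`. -/
def ESubgradAt {n : ℕ} (φ : Euc n → EReal) (v x : Euc n) : Prop :=
  ∀ y : Euc n, φ x + ((⟪v, y - x⟫ : ℝ) : EReal) ≤ φ y

/-- `v` is a subgradient of the real-valued convex function `φ` at `x`. -/
def RSubgradAt {n : ℕ} (φ : Euc n → ℝ) (v x : Euc n) : Prop :=
  ∀ y : Euc n, φ x + ⟪v, y - x⟫ ≤ φ y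

/-- Convexity of an extended-real-valued function. -/
def EConvexF {n : ℕ} (φ : Euc n → EReal) : Prop :=
  ∀ x y : Euc n, ∀ a b : ℝ, 0 ≤ a → 0 ≤ b → a + b = 1 →
    φ (a • x + b • y) ≤ (a : EReal) * φ x + (b : EReal) * φ y

/-- Properness of an extended-real-valued function: never `⊥` and finite somewhere. -/
def ProperF {n : ℕ} (φ : Euc n → EReal) : Prop :=
  (∀ x, φ x ≠ ⊥) ∧ (∃ x, φ x ≠ ⊤)

/-- The quadratic form `uᵀ B u`. -/
def quadF {n : ℕ} (B : Matrix (Fin n) (Fin n) ℝ) (u : Euc n) : ℝ :=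
  ⟪u, (Matrix.toEuclideanLin B) u⟫

/-- The scaled norm `‖u‖_B = √(uᵀ B u)`. -/
def MNorm {n : ℕ} (B : Matrix (Fin n) (Fin n) ℝ) (u : Euc n) : ℝ :=
  Real.sqrt (quadF B u)

/-- The objective `f = g + h₁ - h₂`. -/
def fObj {n : ℕ} (g : Euc n → ℝ) (h₁ : Euc n → EReal) (h₂ : Euc n → ℝ) (x : Euc n) : EReal :=
  (g x : EReal) + h₁ x - (h₂ x : EReal)

/-!
Along the segment from `x` to `x⁺ = x + d` three one-sided estimates add up: the descent lemma
bounds `g(x + ηd)` by the tangent paraboloid of `g` at `x`, convexity of `h₁` bounds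
`h₁(x + ηd)` by the chord `(1 - η) h₁(x) + η h₁(x⁺)`, and the subgradient inequality bounds
`-h₂(x + ηd)` by the linearization of `-h₂` at `x`. Since `h₁` is finite at both endpoints, all
three are real inequalities, and the extended-real objective is compared through its real value.
-/

section LipschitzGradient

variable {E : Type*} [NormedAddCommGroup E] [InnerProductSpace ℝ E]
  {g : E → ℝ} {g' : E → E} {L : ℝ}

theorem HasGradientAt.hasDerivAt_comp_add_smul [CompleteSpace E] {x v u : E} {t : ℝ}
    (hg : HasGradientAt g u (x + t • v)) :
    HasDerivAt (fun s : ℝ => g (x + s • v)) ⟪u, v⟫ t := by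
  have hline : HasDerivAt (fun s : ℝ => x + s • v) v t := by
    simpa using ((hasDerivAt_id t).smul_const v).const_add x
  have hcomp := hg.hasFDerivAt.comp_hasDerivAt t hline
  simp only [InnerProductSpace.toDual_apply_apply] at hcomp
  exact hcomp

theorem inner_gradient_sub_le_of_lipschitz (hLip : ∀ u v, ‖g' u - g' v‖ ≤ L * ‖u - v‖)
    (x v : E) {t : ℝ} (ht : 0 ≤ t) :
    ⟪g' (x + t • v) - g' x, v⟫ ≤ L * t * ‖v‖ ^ 2 :=
  calc ⟪g' (x + t • v) - g' x, v⟫ ≤ ‖g' (x + t • v) - g' x‖ * ‖v‖ := real_inner_le_norm _ _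
    _ ≤ L * ‖(x + t • v) - x‖ * ‖v‖ := by gcongr; exact hLip _ _
    _ = L * t * ‖v‖ ^ 2 := by
      rw [add_sub_cancel_left, norm_smul, Real.norm_of_nonneg ht]; ring

theorem le_add_inner_gradient_add_sq_of_lipschitz [CompleteSpace E]
    (hg : ∀ y, HasGradientAt g (g' y) y)
    (hLip : ∀ u v, ‖g' u - g' v‖ ≤ L * ‖u - v‖) (x v : E) :
    g (x + v) ≤ g x + ⟪g' x, v⟫ + L / 2 * ‖v‖ ^ 2 := by
  -- `g` minus its tangent paraboloid along the ray; its derivative is `≤ 0` by the Lipschitz bound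
  let ψ : ℝ → ℝ := fun t => g (x + t • v) - t * ⟪g' x, v⟫ - L / 2 * t ^ 2 * ‖v‖ ^ 2
  have hψ : ∀ t, HasDerivAt ψ (⟪g' (x + t • v) - g' x, v⟫ - L * t * ‖v‖ ^ 2) t := fun t =>
    ((((hg (x + t • v)).hasDerivAt_comp_add_smul).sub
      ((hasDerivAt_id' t).mul_const ⟪g' x, v⟫)).sub
      (((hasDerivAt_pow 2 t).const_mul (L / 2)).mul_const (‖v‖ ^ 2))).congr_deriv
      (by rw [inner_sub_left]; ring)
  have hanti : AntitoneOn ψ (Set.Icc 0 1) := by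
    refine antitoneOn_of_hasDerivWithinAt_nonpos (convex_Icc 0 1)
      (continuous_iff_continuousAt.2 fun t => (hψ t).continuousAt).continuousOn
      (fun t _ => (hψ t).hasDerivWithinAt) ?_
    intro t ht
    rw [interior_Icc] at ht
    linarith [inner_gradient_sub_le_of_lipschitz hLip x v ht.1.le]
  have h10 := hanti (Set.left_mem_Icc.2 zero_le_one) (Set.right_mem_Icc.2 zero_le_one) zero_le_one
  simp only [ψ, one_smul, zero_smul, add_zero] at h10
  linarith

end LipschitzGradient

theorem EConvexF.le_coe_of_add_smul_sub {n : ℕ} {φ : Euc n → EReal} (hφ : EConvexF φ)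
    {x y : Euc n} {a b η : ℝ} (hx : φ x = a) (hy : φ y = b) (hη₀ : 0 ≤ η) (hη₁ : η ≤ 1) :
    φ (x + η • (y - x)) ≤ (((1 - η) * a + η * b : ℝ) : EReal) := by
  have hseg : x + η • (y - x) = (1 - η) • x + η • y := by module
  calc φ (x + η • (y - x)) ≤ ((1 - η : ℝ) : EReal) * φ x + (η : EReal) * φ y := by
        rw [hseg]; exact hφ x y (1 - η) η (by linarith) hη₀ (by ring)
    _ = (((1 - η) * a + η * b : ℝ) : EReal) := by rw [hx, hy]; norm_cast

theorem fObj_le_coe {n : ℕ} {g : Euc n → ℝ} {h₁ : Euc n → EReal} {h₂ : Euc n → ℝ} {y : Euc n}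
    {c : ℝ} (hc : h₁ y ≤ c) : fObj g h₁ h₂ y ≤ ((g y + c - h₂ y : ℝ) : EReal) := by
  rw [fObj, EReal.coe_sub, EReal.coe_add]
  exact EReal.sub_le_sub (add_le_add_right hc _) le_rfl

theorem fObj_eq_coe {n : ℕ} {g : Euc n → ℝ} {h₁ : Euc n → EReal} {h₂ : Euc n → ℝ} {y : Euc n}
    {c : ℝ} (hc : h₁ y = c) : fObj g h₁ h₂ y = ((g y + c - h₂ y : ℝ) : EReal) := by
  rw [fObj, hc]; norm_cast

theorem descent_inequality_general
    {n : ℕ} (L : ℝ)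
    (g : Euc n → ℝ) (g' : Euc n → Euc n)
    (h₁ : Euc n → EReal) (h₂ : Euc n → ℝ)
    (x xp ξ d : Euc n)
    (hg : ∀ y : Euc n, HasGradientAt g (g' y) y)
    (hLip : ∀ u v : Euc n, ‖g' u - g' v‖ ≤ L * ‖u - v‖)
    (hprop : ProperF h₁) (hconv : EConvexF h₁)
    (hfin : h₁ x ≠ ⊤) (hfinp : h₁ xp ≠ ⊤)
    (hd : d = xp - x)
    (hξ : RSubgradAt h₂ ξ x) :
    ∀ η : ℝ, 0 < η → η ≤ 1 →
      fObj g h₁ h₂ (x + η • d) ≤ fObj g h₁ h₂ x +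
        ((η * (⟪g' x - ξ, d⟫ + (h₁ xp).toReal - (h₁ x).toReal) +
          η ^ 2 * L / 2 * ‖d‖ ^ 2 : ℝ) : EReal) := by
  intro η hη₀ hη₁
  have hx := (EReal.coe_toReal hfin (hprop.1 x)).symm
  have hxp := (EReal.coe_toReal hfinp (hprop.1 xp)).symm
  have hg_step := le_add_inner_gradient_add_sq_of_lipschitz hg hLip x (η • d)
  rw [real_inner_smul_right, norm_smul, Real.norm_of_nonneg hη₀.le, mul_pow] at hg_step
  have hh₂_step := hξ (x + η • d)
  rw [add_sub_cancel_left, real_inner_smul_right] at hh₂_step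
  have hh₁_step := hconv.le_coe_of_add_smul_sub hx hxp hη₀.le hη₁
  rw [← hd] at hh₁_step
  rw [fObj_eq_coe hx, ← EReal.coe_add]
  refine (fObj_le_coe hh₁_step).trans (EReal.coe_le_coe_iff.2 ?_)
  rw [inner_sub_left]
  linarith

/-- the descent inequality
`f(x + ηd) ≤ f(x) + η((∇g(x) - ξ)ᵀd + h₁(x⁺) - h₁(x)) + (η²L/2)‖d‖²` for `η ∈ (0,1]`. -/
theorem descent_inequality
    {n : ℕ} (L : ℝ)
    (g : Euc n → ℝ) (g' : Euc n → Euc n)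
    (h₁ : Euc n → EReal) (h₂ : Euc n → ℝ)
    (x xp ξ d : Euc n)
    (hL : 0 ≤ L)
    (hg : ∀ y : Euc n, HasGradientAt g (g' y) y)
    (hLip : ∀ u v : Euc n, ‖g' u - g' v‖ ≤ L * ‖u - v‖)
    (hprop : ProperF h₁) (hlsc : LowerSemicontinuous h₁) (hconv : EConvexF h₁)
    (hh₂cont : Continuous h₂) (hh₂conv : ConvexOn ℝ Set.univ h₂)
    (hfin : h₁ x ≠ ⊤) (hfinp : h₁ xp ≠ ⊤)
    (hd : d = xp - x)
    (hξ : RSubgradAt h₂ ξ x) :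
    ∀ η : ℝ, 0 < η → η ≤ 1 →
      fObj g h₁ h₂ (x + η • d) ≤ fObj g h₁ h₂ x +
        ((η * (⟪g' x - ξ, d⟫ + (h₁ xp).toReal - (h₁ x).toReal) +
          η ^ 2 * L / 2 * ‖d‖ ^ 2 : ℝ) : EReal) :=
  descent_inequality_general L g g' h₁ h₂ x xp ξ d hg hLip hprop hconv hfin hfinp hd hξ
end
end

section
/- Let g : ℝⁿ → ℝ be differentiable, h₁ : ℝⁿ → ℝ ∪ {+∞} a proper lower semicontinuous convex function, h₂ : ℝⁿ → ℝ a continuous convex function. Let x, x⁺ ∈ ℝⁿ with h₁(x) and h₁(x⁺) finite, d = x⁺ − x, ξ ∈ ∂h₂(x), B a symmetric positive definite matrix, and θ̄ ∈ (0,1]. If r ∈ ℝⁿ satisfies r − (∇g(x) − ξ) − B d ∈ ∂h₁(x⁺) and ‖r‖_{B⁻¹} ≤ (1 − θ̄)‖d‖_B, then (∇g(x) − ξ)ᵀd + h₁(x⁺) − h₁(x) ≤ −θ̄ ‖d‖_B². -/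
/-!
Testing the subgradient inequality of `h₁` at `x⁺` against the point `x` gives
`(∇g(x) - ξ)ᵀd + h₁(x⁺) - h₁(x) ≤ ⟪r, d⟫ - ‖d‖_B²`, and the residual term is controlled by
Cauchy–Schwarz for the dual pair of norms: `⟪r, d⟫ ≤ ‖r‖_{B⁻¹} ‖d‖_B ≤ (1 - θ̄) ‖d‖_B²`.
-/

open Matrix Filter Topology RealInnerProductSpace

noncomputable section

section Quadratic

variable {n : ℕ} {A : Matrix (Fin n) (Fin n) ℝ}

theorem quadF_nonneg (hA : A.PosSemidef) (u : Euc n) : 0 ≤ quadF A u := by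
  simpa [quadF, toLpLin_apply, PiLp.inner_apply, dotProduct, mul_comm]
    using hA.dotProduct_mulVec_nonneg u

theorem mul_self_MNorm (hA : A.PosSemidef) (u : Euc n) : MNorm A u * MNorm A u = quadF A u :=
  Real.mul_self_sqrt (quadF_nonneg hA u)

theorem inner_toEuclideanLin_comm (hA : A.IsHermitian) (u w : Euc n) :
    ⟪u, toEuclideanLin A w⟫ = ⟪w, toEuclideanLin A u⟫ := by
  rw [← isSymmetric_toEuclideanLin_iff.mpr hA, real_inner_comm]

theorem inner_toEuclideanLin_le_MNorm_mul_MNorm (hA : A.PosSemidef) (u w : Euc n) :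
    ⟪u, toEuclideanLin A w⟫ ≤ MNorm A u * MNorm A w := by
  let β : LinearMap.BilinForm ℝ (Euc n) := (innerₗ (Euc n)).compl₂ (toEuclideanLin A)
  have hsq : ⟪u, toEuclideanLin A w⟫ ^ 2 ≤ quadF A u * quadF A w := by
    simpa [β, sq, quadF, inner_toEuclideanLin_comm hA.1 w u] using
      β.apply_mul_apply_le_of_forall_zero_le (quadF_nonneg hA) u w
  rw [MNorm, MNorm, ← Real.sqrt_mul (quadF_nonneg hA u)]
  exact (le_abs_self _).trans (Real.abs_le_sqrt hsq)

theorem toEuclideanLin_inv_toEuclideanLin (hA : IsUnit A.det) (u : Euc n) :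
    toEuclideanLin A⁻¹ (toEuclideanLin A u) = u := by
  simp [toLpLin_apply, mulVec_mulVec, nonsing_inv_mul A hA]

theorem MNorm_inv_toEuclideanLin (hA : IsUnit A.det) (u : Euc n) :
    MNorm A⁻¹ (toEuclideanLin A u) = MNorm A u := by
  rw [MNorm, MNorm, quadF, quadF, toEuclideanLin_inv_toEuclideanLin hA, real_inner_comm]

theorem inner_le_MNorm_inv_mul_MNorm {B : Matrix (Fin n) (Fin n) ℝ} (hB : B.PosDef) (r d : Euc n) :
    ⟪r, d⟫ ≤ MNorm B⁻¹ r * MNorm B d := by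
  have hdet : IsUnit B.det := hB.det_pos.ne'.isUnit
  calc ⟪r, d⟫ = ⟪r, toEuclideanLin B⁻¹ (toEuclideanLin B d)⟫ := by
        rw [toEuclideanLin_inv_toEuclideanLin hdet]
    _ ≤ MNorm B⁻¹ r * MNorm B⁻¹ (toEuclideanLin B d) :=
        inner_toEuclideanLin_le_MNorm_mul_MNorm hB.inv.posSemidef r _
    _ = MNorm B⁻¹ r * MNorm B d := by rw [MNorm_inv_toEuclideanLin hdet]

end Quadratic

theorem ESubgradAt.toReal_add_inner_le {n : ℕ} {φ : Euc n → EReal} {v x₀ : Euc n}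
    (hv : ESubgradAt φ v x₀) {y : Euc n} (hx₀ : φ x₀ ≠ ⊤) (hx₀' : φ x₀ ≠ ⊥) (hy : φ y ≠ ⊤)
    (hy' : φ y ≠ ⊥) : (φ x₀).toReal + ⟪v, y - x₀⟫ ≤ (φ y).toReal := by
  have h := hv y
  rwa [← EReal.coe_toReal hx₀ hx₀', ← EReal.coe_toReal hy hy', ← EReal.coe_add,
    EReal.coe_le_coe_iff] at h

theorem sufficient_decrease_bound_general
    {n : ℕ} (θbar : ℝ)
    (g' : Euc n → Euc n)
    (h₁ : Euc n → EReal)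
    (x xp ξ r d : Euc n) (B : Matrix (Fin n) (Fin n) ℝ)
    (hprop : ProperF h₁)
    (hfin : h₁ x ≠ ⊤) (hfinp : h₁ xp ≠ ⊤)
    (hd : d = xp - x)
    (hB : B.PosDef)
    (hr : ESubgradAt h₁ (r - (g' x - ξ) - (Matrix.toEuclideanLin B) d) xp)
    (hres : MNorm B⁻¹ r ≤ (1 - θbar) * MNorm B d) :
    ⟪g' x - ξ, d⟫ + (h₁ xp).toReal - (h₁ x).toReal ≤ -θbar * quadF B d := by
  have hsub := hr.toReal_add_inner_le (y := x) hfinp (hprop.1 xp) hfin (hprop.1 x)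
  have hxxp : x - xp = -d := by rw [hd, neg_sub]
  rw [hxxp, inner_neg_right, inner_sub_left, inner_sub_left] at hsub
  have hrd : ⟪r, d⟫ ≤ (1 - θbar) * quadF B d :=
    calc ⟪r, d⟫ ≤ MNorm B⁻¹ r * MNorm B d := inner_le_MNorm_inv_mul_MNorm hB r d
      _ ≤ (1 - θbar) * MNorm B d * MNorm B d :=
          mul_le_mul_of_nonneg_right hres (Real.sqrt_nonneg _)
      _ = (1 - θbar) * quadF B d := by rw [mul_assoc, mul_self_MNorm hB.posSemidef]
  have hquad : ⟪toEuclideanLin B d, d⟫ = quadF B d := real_inner_comm _ _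
  linarith

/-- the sufficient decrease bound
`(∇g(x) - ξ)ᵀd + h₁(x⁺) - h₁(x) ≤ -θ̄‖d‖_B²` for the inexact subproblem solution. -/
theorem sufficient_decrease_bound
    {n : ℕ} (θbar : ℝ)
    (g : Euc n → ℝ) (g' : Euc n → Euc n)
    (h₁ : Euc n → EReal) (h₂ : Euc n → ℝ)
    (x xp ξ r d : Euc n) (B : Matrix (Fin n) (Fin n) ℝ)
    (hg : ∀ y : Euc n, HasGradientAt g (g' y) y)
    (hprop : ProperF h₁) (hlsc : LowerSemicontinuous h₁) (hconv : EConvexF h₁)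
    (hh₂cont : Continuous h₂) (hh₂conv : ConvexOn ℝ Set.univ h₂)
    (hfin : h₁ x ≠ ⊤) (hfinp : h₁ xp ≠ ⊤)
    (hd : d = xp - x)
    (hξ : RSubgradAt h₂ ξ x)
    (hB : B.PosDef)
    (hθbar0 : 0 < θbar) (hθbar1 : θbar ≤ 1)
    (hr : ESubgradAt h₁ (r - (g' x - ξ) - (Matrix.toEuclideanLin B) d) xp)
    (hres : MNorm B⁻¹ r ≤ (1 - θbar) * MNorm B d) :
    ⟪g' x - ξ, d⟫ + (h₁ xp).toReal - (h₁ x).toReal ≤ -θbar * quadF B d :=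
  sufficient_decrease_bound_general θbar g' h₁ x xp ξ r d B hprop hfin hfinp hd hB hr hres
end
end
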